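/- arXiv:2110.11295 — 2 statements merged into one kernel-verified Lean document; each statement's English description precedes it below -/
import Mathlib

section
/- Let F ∈ ℂ^{d×N} be a frame with columns f_1,…,f_N and frame operator S = FF*. Fix k ∈ {1,…,N} and let u be a unit eigenvector of the partial frame operator S_k = f_1f_1* + ⋯ + f_kf_k* with eigenvalue μ. Define a new matrix F_t whose first k columns are exp(t√(-1)·uu*)·f_i for i ≤ k and whose remaining columns are f_i for i > k. Then F_t F_t* = FF* for all real t. -/
/-!
The partial frame operator `S_k` is Hermitian, so `S_k u = μ u` with `μ` real gives
`S_k (u uᴴ) = μ u uᴴ = (u uᴴ) S_k`. Hence `S_k` commutes with the unitary `U = exp(i t u uᴴ)`,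
and the first `k` columns of `F_t` contribute `U S_k Uᴴ = S_k` to `F_t F_tᴴ`, while the other
columns contribute the same rank-one terms as before.
-/

open Matrix

namespace Matrix

variable {n ι α : Type*}

theorem vecMulVec_mulVec_star_mulVec [Fintype n] [Semiring α] [StarRing α] (U : Matrix n n α)
    (v : n → α) :
    vecMulVec (U *ᵥ v) (star (U *ᵥ v)) = U * vecMulVec v (star v) * Uᴴ := by
  rw [mul_vecMulVec, vecMulVec_mul, star_mulVec]

theorem isHermitian_vecMulVec_star [Mul α] [StarMul α] (v : n → α) :
    (vecMulVec v (star v)).IsHermitian := by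
  rw [IsHermitian, conjTranspose_vecMulVec, star_star]

theorem commute_vecMulVec_star_of_mulVec_eq_smul [Fintype n] [CommSemiring α] [StarRing α]
    {S : Matrix n n α} (hS : S.IsHermitian) {u : n → α} {μ : α} (hμ : IsSelfAdjoint μ)
    (h : S *ᵥ u = μ • u) : Commute (vecMulVec u (star u)) S := by
  have hleft : star u ᵥ* S = μ • star u := by
    rw [← hS.eq, ← star_mulVec, h, star_smul, hμ.star_eq]
  rw [Commute, SemiconjBy, vecMulVec_mul, mul_vecMulVec, h, hleft, smul_vecMulVec,
    vecMulVec_smul]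

theorem exp_mem_unitary_of_mem_skewAdjoint [Fintype n] [DecidableEq n] [NormedRing α]
    [NormedAlgebra ℚ α] [CompleteSpace α] [StarRing α] [ContinuousStar α] {A : Matrix n n α}
    (hA : A ∈ skewAdjoint (Matrix n n α)) : NormedSpace.exp A ∈ unitary (Matrix n n α) := by
  rw [Unitary.mem_iff, star_eq_conjTranspose, ← exp_conjTranspose, ← star_eq_conjTranspose,
    skewAdjoint.mem_iff.mp hA, ← exp_add_of_commute _ _ (Commute.refl A).neg_left,
    ← exp_add_of_commute _ _ (Commute.refl A).neg_right, neg_add_cancel, add_neg_cancel,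
    NormedSpace.exp_zero, and_self]

section PartialFrameOperator

variable [Semiring α] [StarRing α]

def partialFrameOperator (F : Matrix n ι α) (s : Finset ι) : Matrix n n α :=
  ∑ i ∈ s, vecMulVec (Fᵀ i) (star (Fᵀ i))

theorem isHermitian_partialFrameOperator (F : Matrix n ι α) (s : Finset ι) :
    (partialFrameOperator F s).IsHermitian :=
  isSelfAdjoint_sum s fun i _ => isHermitian_vecMulVec_star (Fᵀ i)

theorem mul_conjTranspose_eq_partialFrameOperator_univ [Fintype ι] (F : Matrix n ι α) :
    F * Fᴴ = partialFrameOperator F Finset.univ := by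
  ext
  simp [partialFrameOperator, mul_apply, sum_apply, vecMulVec_apply]

theorem partialFrameOperator_congr {F G : Matrix n ι α} {s : Finset ι}
    (h : ∀ i ∈ s, Gᵀ i = Fᵀ i) : partialFrameOperator G s = partialFrameOperator F s :=
  Finset.sum_congr rfl fun i hi => by rw [h i hi]

theorem partialFrameOperator_add_compl [Fintype ι] [DecidableEq ι] (F : Matrix n ι α)
    (s : Finset ι) :
    partialFrameOperator F s + partialFrameOperator F sᶜ = partialFrameOperator F Finset.univ :=
  Finset.sum_add_sum_compl s _

theorem partialFrameOperator_of_transpose_eq_mulVec [Fintype n] {F G : Matrix n ι α} {s : Finset ι}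
    {U : Matrix n n α} (h : ∀ i ∈ s, Gᵀ i = U *ᵥ Fᵀ i) :
    partialFrameOperator G s = U * partialFrameOperator F s * Uᴴ := by
  simp only [partialFrameOperator, Finset.mul_sum, Finset.sum_mul]
  exact Finset.sum_congr rfl fun i hi => by rw [h i hi, vecMulVec_mulVec_star_mulVec]

theorem mul_conjTranspose_eq_of_unitary_commute_partialFrameOperator [Fintype n] [DecidableEq n]
    [Fintype ι] [DecidableEq ι] {F G : Matrix n ι α} {s : Finset ι} {U : Matrix n n α}
    (hU : U ∈ unitary (Matrix n n α)) (hUS : Commute U (partialFrameOperator F s))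
    (hrot : ∀ i ∈ s, Gᵀ i = U *ᵥ Fᵀ i) (hfix : ∀ i ∈ sᶜ, Gᵀ i = Fᵀ i) :
    G * Gᴴ = F * Fᴴ := by
  have hconj : U * partialFrameOperator F s * Uᴴ = partialFrameOperator F s := by
    rw [hUS.eq, mul_assoc, ← star_eq_conjTranspose, Unitary.mul_star_self_of_mem hU, mul_one]
  rw [mul_conjTranspose_eq_partialFrameOperator_univ,
    mul_conjTranspose_eq_partialFrameOperator_univ, ← partialFrameOperator_add_compl G s,
    ← partialFrameOperator_add_compl F s, partialFrameOperator_of_transpose_eq_mulVec hrot, hconj,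
    partialFrameOperator_congr hfix]

end PartialFrameOperator

end Matrix

theorem circle_action_preserves_frame_operator_general (d N : ℕ) (F : Matrix (Fin d) (Fin N) ℂ)
    (k : ℕ) (u : Fin d → ℂ) (μ : ℝ)
    (heig : (∑ i ∈ Finset.univ.filter (fun i : Fin N => (i : ℕ) < k),
        Matrix.vecMulVec (fun j => F j i) (star fun j => F j i)).mulVec u = (μ : ℂ) • u)
    (t : ℝ)
    (Ft : Matrix (Fin d) (Fin N) ℂ)
    (hFt : ∀ i : Fin N, (fun j => Ft j i) =
      if (i : ℕ) < k then
        (NormedSpace.exp (((t : ℂ) * Complex.I) • Matrix.vecMulVec u (star u))).mulVec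
          (fun j => F j i)
      else fun j => F j i) :
    Ft * Ftᴴ = F * Fᴴ := by
  set s := Finset.univ.filter fun i : Fin N => (i : ℕ) < k
  have hcomm : Commute (vecMulVec u (star u)) (partialFrameOperator F s) :=
    commute_vecMulVec_star_of_mulVec_eq_smul (isHermitian_partialFrameOperator F s)
      (Complex.conj_ofReal μ) heig
  have hskew :
      ((t : ℂ) * Complex.I) • vecMulVec u (star u) ∈ skewAdjoint (Matrix (Fin d) (Fin d) ℂ) :=
    (isHermitian_vecMulVec_star u).isSelfAdjoint.smul_mem_skewAdjoint
      (by simp [skewAdjoint.mem_iff])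
  refine mul_conjTranspose_eq_of_unitary_commute_partialFrameOperator
    (exp_mem_unitary_of_mem_skewAdjoint hskew) (hcomm.smul_left _).exp_left
    (fun i hi => ?_) (fun i hi => ?_)
  · exact (hFt i).trans (if_pos (Finset.mem_filter.mp hi).2)
  · exact (hFt i).trans (if_neg fun hik => Finset.mem_compl.mp hi (by simp [s, hik]))

/-- The eigenstep circle action preserves the frame operator: if `u` is a unit eigenvector
of the `k`-th partial frame operator `S_k = Σ_{i<k} f_i f_iᴴ` with eigenvalue `μ`, and `F_t`
is obtained from `F` by applying `exp(t√(-1)·uuᴴ)` to the first `k` columns, then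
`F_t * F_tᴴ = F * Fᴴ` for all real `t`. -/
theorem circle_action_preserves_frame_operator (d N : ℕ) (F : Matrix (Fin d) (Fin N) ℂ)
    (k : ℕ) (hk1 : 1 ≤ k) (hkN : k ≤ N) (u : Fin d → ℂ) (μ : ℝ)
    (hu : star u ⬝ᵥ u = 1)
    (heig : (∑ i ∈ Finset.univ.filter (fun i : Fin N => (i : ℕ) < k),
        Matrix.vecMulVec (fun j => F j i) (star fun j => F j i)).mulVec u = (μ : ℂ) • u)
    (t : ℝ)
    (Ft : Matrix (Fin d) (Fin N) ℂ)
    (hFt : ∀ i : Fin N, (fun j => Ft j i) =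
      if (i : ℕ) < k then
        (NormedSpace.exp (((t : ℂ) * Complex.I) • Matrix.vecMulVec u (star u))).mulVec
          (fun j => F j i)
      else fun j => F j i) :
    Ft * Ftᴴ = F * Fᴴ :=
  circle_action_preserves_frame_operator_general d N F k u μ heig t Ft hFt
end

section
/- Suppose F ∈ ℂ^{d×N} has column norms ‖f_i‖² = r_i, frame operator eigenvalues λ₁ ≥ ⋯ ≥ λ_d > 0, and there exists k ∈ {1,…,d−1} with r₁+⋯+r_k = λ₁+⋯+λ_k, where r₁ ≥ ⋯ ≥ r_N > 0 and r₁+⋯+r_N = λ₁+⋯+λ_d. Then the last d columns f_{N−d+1},…,f_N of F are linearly dependent; hence F is not full spark. -/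
/-!
Let `W` be the span of the first `k` columns, of dimension `m ≤ k`, and `P` the orthogonal
projection onto `W`. Expanding `∑ⱼ ‖P fⱼ‖² = tr (P F F*)` in an eigenbasis of `F F*`, Ky Fan's
principle bounds it by `λ₁ + ⋯ + λₘ`, while the first `k` columns alone contribute
`r₁ + ⋯ + r_k = λ₁ + ⋯ + λ_k`. As the `λᵢ` are positive, this forces `m = k` and `P fⱼ = 0` for
all later columns, which therefore lie in the `(d - k)`-dimensional space `Wᗮ`. More than `d - k`
of the last `d` columns come after the first `k`, so the last `d` columns are dependent.
-/
open Matrix Finset Module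
open scoped InnerProductSpace

theorem Antitone.sum_mul_le_sum_filter_val_lt {d m : ℕ} (hm : m < d) {lam s : Fin d → ℝ}
    (hlam : Antitone lam) (hs0 : ∀ a, 0 ≤ s a) (hs1 : ∀ a, s a ≤ 1) (hsum : ∑ a, s a = m) :
    ∑ a, lam a * s a ≤ ∑ a with a.val < m, lam a := by
  -- compare every weight with the threshold `c = lam m`; the errors add up to `c * (∑ s - m) = 0`
  set c := lam ⟨m, hm⟩
  have hterm (a : Fin d) : lam a * s a
      ≤ (if a.val < m then lam a else 0) + c * (s a - if a.val < m then 1 else 0) := by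
    split_ifs with ha
    · nlinarith [hs1 a, hlam (Fin.le_def.2 ha.le : a ≤ ⟨m, hm⟩)]
    · nlinarith [hs0 a, hlam (Fin.le_def.2 (not_lt.1 ha) : (⟨m, hm⟩ : Fin d) ≤ a)]
  calc ∑ a, lam a * s a
      ≤ ∑ a, ((if a.val < m then lam a else 0) + c * (s a - if a.val < m then 1 else 0)) :=
        sum_le_sum fun a _ => hterm a
    _ = ∑ a with a.val < m, lam a := by
      rw [sum_add_distrib, ← mul_sum, sum_sub_distrib, hsum, sum_boole, Fin.card_filter_val_lt,
        min_eq_right hm.le, ← sum_filter]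
      ring

theorem sum_filter_val_lt_lt_of_lt {d m k : ℕ} {lam : Fin d → ℝ} (hlam : ∀ a, 0 < lam a)
    (hmk : m < k) (hkd : k ≤ d) :
    ∑ a with a.val < m, lam a < ∑ a with a.val < k, lam a :=
  sum_lt_sum_of_subset (fun a ha => by simp only [mem_filter, mem_univ, true_and] at ha ⊢; omega)
    (i := ⟨m, by omega⟩) (by simpa) (by simp) (hlam _) fun a _ _ => (hlam a).le

theorem LinearIndependent.card_le_finrank_of_forall_mem {K V ι : Type*} [DivisionRing K]
    [AddCommGroup V] [Module K V] [Fintype ι] {v : ι → V} (hv : LinearIndependent K v)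
    {W : Submodule K V} [FiniteDimensional K W] (hvW : ∀ i, v i ∈ W) :
    Fintype.card ι ≤ finrank K W :=
  finrank_span_eq_card hv ▸
    Submodule.finrank_mono (Submodule.span_le.2 (Set.range_subset_iff.2 hvW))

section InnerProduct

variable {𝕜 : Type*} [RCLike 𝕜]

section Projection

variable {E : Type*} [NormedAddCommGroup E] [InnerProductSpace 𝕜 E]

theorem OrthonormalBasis.sq_norm_orthogonalProjectionOnto_eq_sum {ι : Type*} [Fintype ι]
    {W : Submodule 𝕜 E} [W.HasOrthogonalProjection] (b : OrthonormalBasis ι 𝕜 W) (x : E) :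
    ‖W.orthogonalProjectionOnto x‖ ^ 2 = ∑ i, ‖⟪(b i : E), x⟫_𝕜‖ ^ 2 := by
  rw [← b.sum_sq_norm_inner_right]
  simp

theorem OrthonormalBasis.sum_sum_mul_sq_norm_inner_le {d m : ℕ} (hm : m < d)
    (u : OrthonormalBasis (Fin d) 𝕜 E) {lam : Fin d → ℝ} (hlam : Antitone lam) {b : Fin m → E}
    (hb : Orthonormal 𝕜 b) :
    ∑ i, ∑ a, lam a * ‖⟪u a, b i⟫_𝕜‖ ^ 2 ≤ ∑ a with a.val < m, lam a := by
  rw [sum_comm]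
  simp_rw [← mul_sum]
  refine hlam.sum_mul_le_sum_filter_val_lt hm (fun a => sum_nonneg fun i _ => by positivity)
    (fun a => ?_) ?_
  · simpa [norm_inner_symm, u.orthonormal.1 a] using hb.sum_inner_products_le (u a) (s := univ)
  · rw [sum_comm]
    simp [u.sum_sq_norm_inner_right, hb.1]

end Projection

variable {n ι : Type*} [Fintype n] [DecidableEq n] [Fintype ι] [DecidableEq ι]

lemma Matrix.IsHermitian.re_inner_mulVec_self_eq_sum_eigenvalues {A : Matrix n n 𝕜}
    (hA : A.IsHermitian) (x : EuclideanSpace 𝕜 n) :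
    RCLike.re ⟪x, WithLp.toLp 2 (A *ᵥ x)⟫_𝕜
      = ∑ a, hA.eigenvalues a * ‖⟪hA.eigenvectorBasis a, x⟫_𝕜‖ ^ 2 := by
  set u := hA.eigenvectorBasis
  have hu (a : n) : ⟪u a, WithLp.toLp 2 (A *ᵥ x)⟫_𝕜 = hA.eigenvalues a * ⟪u a, x⟫_𝕜 := by
    rw [← toLpLin_apply, ← isSymmetric_toEuclideanLin_iff.mpr hA, toLpLin_apply,
      hA.mulVec_eigenvectorBasis, WithLp.toLp_smul, WithLp.toLp_ofLp,
      RCLike.real_smul_eq_coe_smul (K := 𝕜), inner_smul_left, RCLike.conj_ofReal]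
  rw [← u.sum_inner_mul_inner, map_sum]
  refine sum_congr rfl fun a _ => ?_
  rw [hu, ← inner_conj_symm x, mul_left_comm, RCLike.conj_mul, ← RCLike.ofReal_pow,
    ← RCLike.ofReal_mul, RCLike.ofReal_re]

lemma Matrix.sum_sq_norm_inner_col_eq (F : Matrix n ι 𝕜) (x : EuclideanSpace 𝕜 n) :
    ∑ j, ‖⟪WithLp.toLp 2 (Fᵀ j), x⟫_𝕜‖ ^ 2
      = RCLike.re ⟪x, WithLp.toLp 2 ((F * Fᴴ) *ᵥ x)⟫_𝕜 := by
  have hcol (j : ι) : ⟪WithLp.toLp 2 (Fᵀ j), x⟫_𝕜 = (Fᴴ *ᵥ x) j := by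
    simp [EuclideanSpace.inner_eq_star_dotProduct, mulVec, dotProduct, mul_comm]
  have hadj : ⟪x, WithLp.toLp 2 ((F * Fᴴ) *ᵥ x)⟫_𝕜
      = ⟪WithLp.toLp 2 (Fᴴ *ᵥ x), WithLp.toLp 2 (Fᴴ *ᵥ x)⟫_𝕜 := by
    have := LinearMap.adjoint_inner_left (toEuclideanLin F) (WithLp.toLp 2 (Fᴴ *ᵥ x)) x
    rw [← toEuclideanLin_conjTranspose_eq_adjoint] at this
    simpa [toLpLin_apply, ← mulVec_mulVec] using this.symm
  simp_rw [hcol, hadj, inner_self_eq_norm_sq, EuclideanSpace.norm_sq_eq]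

theorem Matrix.sum_sq_norm_orthogonalProjectionOnto_col_le {d : ℕ} (F : Matrix (Fin d) ι 𝕜)
    {lam : Fin d → ℝ} (hlam : Antitone lam) (σ : Equiv.Perm (Fin d))
    (hσ : ∀ a, lam a = (isHermitian_mul_conjTranspose_self F).eigenvalues (σ a))
    (W : Submodule 𝕜 (EuclideanSpace 𝕜 (Fin d))) (hW : finrank 𝕜 W < d) :
    ∑ j, ‖W.orthogonalProjectionOnto (WithLp.toLp 2 (Fᵀ j))‖ ^ 2
      ≤ ∑ a with a.val < finrank 𝕜 W, lam a := by
  set hS := isHermitian_mul_conjTranspose_self F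
  set b := stdOrthonormalBasis 𝕜 W
  set u := hS.eigenvectorBasis.reindex σ.symm
  calc ∑ j, ‖W.orthogonalProjectionOnto (WithLp.toLp 2 (Fᵀ j))‖ ^ 2
      = ∑ i, ∑ j, ‖⟪WithLp.toLp 2 (Fᵀ j), (b i : EuclideanSpace 𝕜 (Fin d))⟫_𝕜‖ ^ 2 := by
        simp_rw [b.sq_norm_orthogonalProjectionOnto_eq_sum, norm_inner_symm]
        exact sum_comm
    _ = ∑ i, ∑ a, lam a * ‖⟪u a, (b i : EuclideanSpace 𝕜 (Fin d))⟫_𝕜‖ ^ 2 := by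
        refine sum_congr rfl fun i _ => ?_
        rw [sum_sq_norm_inner_col_eq, hS.re_inner_mulVec_self_eq_sum_eigenvalues,
          ← Equiv.sum_comp σ]
        simp [u, hσ]
    _ ≤ _ := u.sum_sum_mul_sq_norm_inner_le hW hlam
        (b.orthonormal.comp_linearIsometry W.subtypeₗᵢ)

theorem Matrix.exists_finrank_eq_forall_col_mem_of_sum_eq {d N : ℕ}
    (F : Matrix (Fin d) (Fin N) 𝕜) {lam : Fin d → ℝ} (hlam : Antitone lam)
    (hpos : ∀ a, 0 < lam a) (σ : Equiv.Perm (Fin d))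
    (hσ : ∀ a, lam a = (isHermitian_mul_conjTranspose_self F).eigenvalues (σ a))
    {k : ℕ} (hkd : k < d) (hkN : k ≤ N)
    (hhead : ∑ j with j.val < k, ∑ a, ‖F a j‖ ^ 2 = ∑ a with a.val < k, lam a) :
    ∃ V : Submodule 𝕜 (EuclideanSpace 𝕜 (Fin d)),
      finrank 𝕜 V = d - k ∧ ∀ j : Fin N, k ≤ j.val → WithLp.toLp 2 (Fᵀ j) ∈ V := by
  set f : Fin N → EuclideanSpace 𝕜 (Fin d) := fun j => WithLp.toLp 2 (Fᵀ j)
  set W := Submodule.span 𝕜 (Set.range fun i : Fin k => f (Fin.castLE hkN i))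
  have hWk_le : finrank 𝕜 W ≤ k := (finrank_range_le_card _).trans_eq (Fintype.card_fin k)
  have hkyfan := F.sum_sq_norm_orthogonalProjectionOnto_col_le hlam σ hσ W (by omega)
  rw [← sum_filter_add_sum_filter_not _ (fun j : Fin N => j.val < k)] at hkyfan
  have hhead_proj : ∑ j with j.val < k, ‖W.orthogonalProjectionOnto (f j)‖ ^ 2
      = ∑ a with a.val < k, lam a := by
    rw [← hhead]
    refine sum_congr rfl fun j hj => ?_
    have hjW : f j ∈ W := Submodule.subset_span ⟨⟨j, by simpa using hj⟩, rfl⟩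
    rw [Submodule.norm_orthogonalProjectionOnto_apply _ hjW, EuclideanSpace.norm_sq_eq]
    rfl
  have htail_nonneg : 0 ≤ ∑ j with ¬ j.val < k, ‖W.orthogonalProjectionOnto (f j)‖ ^ 2 :=
    sum_nonneg fun _ _ => by positivity
  have hWk : finrank 𝕜 W = k := le_antisymm hWk_le <| not_lt.1 fun h =>
    (sum_filter_val_lt_lt_of_lt hpos h hkd.le).not_ge (by linarith)
  rw [hWk, hhead_proj] at hkyfan
  have htail := (sum_eq_zero_iff_of_nonneg fun _ _ => by positivity).1
    (by linarith : ∑ j with ¬ j.val < k, ‖W.orthogonalProjectionOnto (f j)‖ ^ 2 = 0)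
  refine ⟨Wᗮ, ?_, fun j hj => ?_⟩
  · have := W.finrank_add_finrank_orthogonal
    rw [finrank_euclideanSpace_fin] at this
    omega
  · exact W.orthogonalProjectionOnto_eq_zero_iff.1 <| norm_eq_zero.1 <|
      (pow_eq_zero_iff two_ne_zero).1 (htail j (by simpa using hj))

end InnerProduct

/-- If the column norms `r` of `F` are `λ`-admissible but not strongly `λ`-admissible
(i.e. some partial-sum inequality is an equality, with `k < d`), then the last `d`
columns of `F` are linearly dependent; in particular `F` is not full spark. -/
theorem not_strongly_admissible_not_full_spark (d N : ℕ) (hdN : d < N)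
    (F : Matrix (Fin d) (Fin N) ℂ) (r : Fin N → ℝ) (lam : Fin d → ℝ)
    (hr : ∀ i, r i = ∑ j : Fin d, ‖F j i‖ ^ 2)
    (hlmono : Antitone lam) (hlpos : ∀ i, 0 < lam i)
    (hspec : ∃ σ : Equiv.Perm (Fin d), ∀ i,
      lam i = (Matrix.isHermitian_mul_conjTranspose_self F).eigenvalues (σ i))
    (k : ℕ) (hk1 : 1 ≤ k) (hkd : k ≤ d - 1)
    (heq : ∑ i ∈ Finset.univ.filter (fun i : Fin N => (i : ℕ) < k), r i
         = ∑ i ∈ Finset.univ.filter (fun i : Fin d => (i : ℕ) < k), lam i) :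
    ¬ LinearIndependent ℂ
        (fun i : Fin d => (fun j => F j ⟨N - d + (i : ℕ), by have := i.isLt; omega⟩ :
          Fin d → ℂ)) := by
  intro hli
  obtain ⟨σ, hσ⟩ := hspec
  obtain ⟨V, hV, hcolV⟩ := F.exists_finrank_eq_forall_col_mem_of_sum_eq hlmono hlpos σ hσ
    (k := k) (by omega) (by omega) (by simpa only [hr] using heq)
  -- the last `d` columns with index at least `k` are the columns `N - d + i` with `c ≤ i`
  set c := k - (N - d)
  have hcard := (hli.map' (WithLp.linearEquiv 2 ℂ (Fin d → ℂ)).symm.toLinearMap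
      (LinearEquiv.ker _)).comp (fun i : Fin (d - c) => (⟨c + i, by omega⟩ : Fin d))
      (fun i i' h => by simpa [Fin.ext_iff] using h)
    |>.card_le_finrank_of_forall_mem (hvW := fun i => hcolV _ (by dsimp only; omega))
  rw [Fintype.card_fin, hV] at hcard
  omega
end
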